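/- Let H be a bialgebra over a commutative ring R, n a natural number, and t^1, …, t^n, C : H → R and f_j^i : H → R (for 1 ≤ i,j ≤ n) R-linear functionals satisfying, for all a, b ∈ H and all i: t^i(a·b) = C(a) t^i(b) + Σ_j t^j(a) f_j^i(b). Define d : H → H^n by (d a)_i = t^i_L(a) = Σ a_(1) t^i(a_(2)); define c : H → H by c(a) = Σ a_(1) C(a_(2)); define the left action (h • v)_i = h · v_i for h ∈ H, v ∈ H^n; and define the right action of H on H^n by (v ◁ b)_i = Σ_j Σ v_j · b_(1) · f_j^i(b_(2)). Then for all a, b ∈ H: d(a·b) = c(a) • d(b) + (d a) ◁ b. (Generalized Leibniz rule of the Sudbery-type differential calculus, equation (16).) -/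

import Mathlib

/-!
Since `Δ` is multiplicative, `t^i_L(ab) = (id ⊗ t^i)(Δa · Δb)`. On pure tensors
`(a₁ ⊗ a₂)(b₁ ⊗ b₂) = a₁b₁ ⊗ a₂b₂`, so the twisted Leibniz rule of `t^i` on the second legs
splits `(id ⊗ t^i)` of the product exactly as claimed, and bilinearity does the rest.
-/

open TensorProduct

/-- The left-invariant vector field `t_L(a) = Σ a_(1) t(a_(2))`. -/
noncomputable def tL (R C : Type*) [CommRing R] [AddCommGroup C] [Module R C]
    [Coalgebra R C] (t : C →ₗ[R] R) : C →ₗ[R] C :=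
  (TensorProduct.rid R C).toLinearMap ∘ₗ (LinearMap.lTensor C t) ∘ₗ Coalgebra.comul

section sliceSnd

variable {R B A : Type*} [CommSemiring R] [Semiring B] [Algebra R B] [Semiring A] [Algebra R A]

noncomputable def sliceSnd (s : A →ₗ[R] R) : B ⊗[R] A →ₗ[R] B :=
  (TensorProduct.rid R B).toLinearMap ∘ₗ LinearMap.lTensor B s

@[simp]
lemma sliceSnd_tmul (s : A →ₗ[R] R) (b : B) (a : A) : sliceSnd s (b ⊗ₜ a) = s a • b := by
  simp [sliceSnd]

lemma sliceSnd_mul {ι : Type*} [Fintype ι] (t : ι → A →ₗ[R] R) (C : A →ₗ[R] R)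
    (f : ι → ι → A →ₗ[R] R)
    (hyp : ∀ (a a' : A) (i : ι), t i (a * a') = C a * t i a' + ∑ j, t j a * f j i a')
    (u v : B ⊗[R] A) (i : ι) :
    sliceSnd (t i) (u * v) =
      sliceSnd C u * sliceSnd (t i) v + ∑ j, sliceSnd (t j) u * sliceSnd (f j i) v := by
  induction u using TensorProduct.induction_on with
  | zero => simp
  | add u₁ u₂ h₁ h₂ =>
    simp only [add_mul, map_add, h₁, h₂, Finset.sum_add_distrib]
    abel
  | tmul b a =>
    induction v using TensorProduct.induction_on with
    | zero => simp
    | add v₁ v₂ h₁ h₂ =>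
      simp only [mul_add, map_add, h₁, h₂, Finset.sum_add_distrib]
      abel
    | tmul b' a' =>
      simp only [Algebra.TensorProduct.tmul_mul_tmul, sliceSnd_tmul, hyp, add_smul,
        Finset.sum_smul, mul_smul, smul_mul_smul_comm]

end sliceSnd

lemma tL_eq_sliceSnd_comul {R H : Type*} [CommRing R] [Ring H] [Bialgebra R H]
    (s : H →ₗ[R] R) : tL R H s = sliceSnd s ∘ₗ Coalgebra.comul :=
  rfl

/-- Here `tL R H C` is the map `c`, and `tL R H (f j i) b = Σ b_(1) f_j^i(b_(2))` is the
coefficient of the right action `◁`. -/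
theorem generalized_leibniz (R H : Type*) [CommRing R] [Ring H] [Bialgebra R H] {n : ℕ}
    (t : Fin n → (H →ₗ[R] R)) (C : H →ₗ[R] R) (f : Fin n → Fin n → (H →ₗ[R] R))
    (hyp : ∀ (a b : H) (i : Fin n),
      t i (a * b) = C a * t i b + ∑ j, t j a * f j i b) :
    ∀ (a b : H) (i : Fin n),
      tL R H (t i) (a * b) =
        tL R H C a * tL R H (t i) b + ∑ j, tL R H (t j) a * tL R H (f j i) b := by
  intro a b i
  simp only [tL_eq_sliceSnd_comul, LinearMap.comp_apply, Bialgebra.comul_mul]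
  exact sliceSnd_mul t C f hyp _ _ i
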